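/- Let n ≥ 2, let α ∈ [0,1], let C, D ∈ ℝ^{n×n} be symmetric, let M ∈ ℝ^{n×n}, and fix V ∈ ℝ^{n×(n−1)} with Vᵀ·1 = 0 and Vᵀ V = I_{n−1}; write M̂ := Vᵀ M V. Define the orthogonal fused Gromov–Wasserstein discrepancy OFGW(C,D,M;α) := (α/n²)(‖C‖_F² + ‖D‖_F²) − (1/n²)·sup_{P ∈ O_n ∩ E_n} [ 2α·tr(C P D Pᵀ) − (1−α)·tr(Mᵀ P) ], where O_n := {P ∈ ℝ^{n×n} : Pᵀ P = I} and E_n := {P ∈ ℝ^{n×n} : P·1 = Pᵀ·1 = 1}. If 1ᵀ M 1 ≥ n·‖M̂‖_*, where ‖·‖_* denotes the trace norm (sum of singular values), then OFGW(C,D,M;α) ≥ 0. Moreover, when M = 0, OFGW(C,D,0;α) = α·OGW(C,D) with OGW(C,D) := (1/n²)(‖C‖_F² + ‖D‖_F² − 2·sup_{P ∈ O_n ∩ E_n} tr(C P D Pᵀ)). -/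

import Mathlib

/-!
Every `P ∈ O_n ∩ E_n` fixes `1`, so it commutes with the centering projection `V Vᵀ = I - J/n`
and splits as `P = J/n + V Q Vᵀ` with `Q = Vᵀ P V` orthogonal. Hence, by von Neumann's trace
inequality, `tr(Mᵀ P) = 1ᵀ M 1 / n + tr(M̂ᵀ Q) ≥ 1ᵀ M 1 / n - ‖M̂‖_* ≥ 0`. The structural term is
bounded by `2 tr(C P D Pᵀ) ≤ ‖C‖_F² + ‖P D Pᵀ‖_F² = ‖C‖_F² + ‖D‖_F²`, so every value in the
supremum is at most `α (‖C‖_F² + ‖D‖_F²)`. For `M = 0` the supremum is `2α` times the one in `OGW`.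
-/

open Matrix BigOperators

noncomputable section

/-- Squared Frobenius norm of a real matrix. -/
def frobSq {m n : ℕ} (A : Matrix (Fin m) (Fin n) ℝ) : ℝ := ∑ i, ∑ j, (A i j) ^ 2

/-- Euclidean norm of a real vector. -/
def vnorm {n : ℕ} (v : Fin n → ℝ) : ℝ := Real.sqrt (∑ i, (v i) ^ 2)

/-- Eigenvalues of a real symmetric (Hermitian) matrix, listed in descending order. -/
def eigDesc {n : ℕ} {A : Matrix (Fin n) (Fin n) ℝ} (hA : A.IsHermitian) : Fin n → ℝ :=
  fun i => (hA.eigenvalues ∘ Tuple.sort hA.eigenvalues) i.rev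

/-- Conjugating a real symmetric (Hermitian) matrix preserves symmetry. -/
theorem conjHerm {n m : ℕ} (V : Matrix (Fin n) (Fin m) ℝ) {C : Matrix (Fin n) (Fin n) ℝ}
    (hC : C.IsHermitian) : (Vᵀ * C * V).IsHermitian := by
  have h := Matrix.isHermitian_mul_mul_conjTranspose Vᵀ hC
  simpa using h


/-- The set `O_n ∩ E_n` of orthogonal matrices whose row and column sums all equal `1`. -/
def OE (n : ℕ) : Set (Matrix (Fin n) (Fin n) ℝ) :=
  {P | Pᵀ * P = 1 ∧ (P *ᵥ (fun _ => (1 : ℝ)) = fun _ => 1)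
    ∧ (Pᵀ *ᵥ (fun _ => (1 : ℝ)) = fun _ => 1)}

/-- The orthogonal Gromov-Wasserstein discrepancy `OGW`. -/
def OGW (n : ℕ) (C D : Matrix (Fin n) (Fin n) ℝ) : ℝ :=
  (1 / (n : ℝ) ^ 2) * (frobSq C + frobSq D
    - 2 * sSup ((fun P => Matrix.trace (C * P * D * Pᵀ)) '' (OE n)))


/-- The trace (nuclear) norm of a real matrix: the sum of its singular values. -/
def traceNorm {k l : ℕ} (X : Matrix (Fin k) (Fin l) ℝ) : ℝ :=
  ∑ i, Real.sqrt ((Matrix.isHermitian_conjTranspose_mul_self X).eigenvalues i)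

/-- The orthogonal fused Gromov-Wasserstein discrepancy `OFGW`. -/
def OFGW (n : ℕ) (α : ℝ) (C D M : Matrix (Fin n) (Fin n) ℝ) : ℝ :=
  (α / (n : ℝ) ^ 2) * (frobSq C + frobSq D)
    - (1 / (n : ℝ) ^ 2) * sSup ((fun P =>
        2 * α * Matrix.trace (C * P * D * Pᵀ)
          - (1 - α) * Matrix.trace (Mᵀ * P)) '' (OE n))

open scoped Pointwise

section Frobenius

variable {m n : ℕ}

lemma frobSq_nonneg (A : Matrix (Fin m) (Fin n) ℝ) : 0 ≤ frobSq A := by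
  unfold frobSq; positivity

lemma frobSq_eq_trace_mul_transpose (A : Matrix (Fin m) (Fin n) ℝ) :
    frobSq A = trace (A * Aᵀ) := by
  simp [frobSq, trace, mul_apply, sq]

lemma two_mul_trace_mul_le_frobSq_add (A : Matrix (Fin m) (Fin n) ℝ)
    (B : Matrix (Fin n) (Fin m) ℝ) : 2 * trace (A * B) ≤ frobSq A + frobSq B := by
  have hB : frobSq B = ∑ i, ∑ j, B j i ^ 2 := Finset.sum_comm
  rw [hB, frobSq, ← Finset.sum_add_distrib, trace, Finset.mul_sum]
  gcongr with i _
  simp only [diag_apply, mul_apply, Finset.mul_sum, ← Finset.sum_add_distrib]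
  gcongr with j _
  linarith [two_mul_le_add_sq (A i j) (B j i)]

lemma frobSq_mul_mul_transpose {P : Matrix (Fin n) (Fin n) ℝ} (hP : Pᵀ * P = 1)
    (D : Matrix (Fin n) (Fin n) ℝ) : frobSq (P * D * Pᵀ) = frobSq D := by
  rw [frobSq_eq_trace_mul_transpose, frobSq_eq_trace_mul_transpose]
  calc trace (P * D * Pᵀ * (P * D * Pᵀ)ᵀ) = trace (P * (D * Dᵀ) * Pᵀ) := by
        simp only [transpose_mul, transpose_transpose, Matrix.mul_assoc]
        rw [← Matrix.mul_assoc Pᵀ P, hP, Matrix.one_mul]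
    _ = trace (D * Dᵀ) := by rw [trace_mul_cycle, hP, Matrix.one_mul]

lemma two_mul_trace_mul_conj_le (C D : Matrix (Fin n) (Fin n) ℝ)
    {P : Matrix (Fin n) (Fin n) ℝ} (hP : Pᵀ * P = 1) :
    2 * trace (C * P * D * Pᵀ) ≤ frobSq C + frobSq D := by
  have h := two_mul_trace_mul_le_frobSq_add C (P * D * Pᵀ)
  rwa [frobSq_mul_mul_transpose hP, ← Matrix.mul_assoc, ← Matrix.mul_assoc] at h

end Frobenius

lemma trace_transpose_mul_le_sum_sqrt_diag {m l : Type*} [Fintype m] [Fintype l]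
    [DecidableEq l] (B R : Matrix m l ℝ) (hR : Rᵀ * R = 1) :
    trace (Bᵀ * R) ≤ ∑ i, √((Bᵀ * B) i i) := by
  have hcol (i : l) : ∑ j, R j i * R j i = 1 := by
    simpa [mul_apply] using congrFun (congrFun hR i) i
  unfold trace
  gcongr with i _
  simpa [mul_apply, sq, hcol] using
    Real.sum_mul_le_sqrt_mul_sqrt Finset.univ (fun j => B j i) (fun j => R j i)

lemma trace_transpose_mul_le_traceNorm {k l : ℕ} (A Q : Matrix (Fin k) (Fin l) ℝ)
    (hQ : Qᵀ * Q = 1) : trace (Aᵀ * Q) ≤ traceNorm A := by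
  set hH := isHermitian_conjTranspose_mul_self A
  set U : Matrix (Fin l) (Fin l) ℝ := ↑hH.eigenvectorUnitary
  have hUU : Uᵀ * U = 1 := hH.eigenvectorUnitary.2.1
  have hUU' : U * Uᵀ = 1 := hH.eigenvectorUnitary.2.2
  -- rotating by the eigenvectors of `Aᵀ A` makes the columns of `A U` orthogonal, with squared
  -- norms the eigenvalues
  have hdiag : Uᵀ * (Aᵀ * A) * U = diagonal hH.eigenvalues := by
    have h := hH.conjStarAlgAut_star_eigenvectorUnitary
    rw [Unitary.conjStarAlgAut_star_apply] at h
    exact h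
  calc trace (Aᵀ * Q) = trace ((A * U)ᵀ * (Q * U)) := by
        rw [transpose_mul, show Uᵀ * Aᵀ * (Q * U) = Uᵀ * (Aᵀ * Q * U) by
          simp only [Matrix.mul_assoc], trace_mul_comm Uᵀ, Matrix.mul_assoc, hUU', Matrix.mul_one]
    _ ≤ ∑ i, √(((A * U)ᵀ * (A * U)) i i) := by
        refine trace_transpose_mul_le_sum_sqrt_diag _ _ ?_
        rw [transpose_mul, Matrix.mul_assoc, ← Matrix.mul_assoc Qᵀ, hQ, Matrix.one_mul, hUU]
    _ = traceNorm A := by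
        have : (A * U)ᵀ * (A * U) = diagonal hH.eigenvalues := by
          rw [← hdiag, transpose_mul]; simp only [Matrix.mul_assoc]
        rw [this]
        simp [traceNorm]

lemma mul_transpose_eq_one_sub_smul_vecMulVec {n : ℕ} {V : Matrix (Fin n) (Fin (n - 1)) ℝ}
    (hV1 : Vᵀ *ᵥ 1 = 0) (hV2 : Vᵀ * V = 1) :
    V * Vᵀ = 1 - (n : ℝ)⁻¹ • vecMulVec 1 1 := by
  obtain rfl | hn := Nat.eq_zero_or_pos n
  · exact Subsingleton.elim _ _
  have hcol (j : Fin (n - 1)) : ∑ i, V i j = 0 := by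
    simpa [mulVec, dotProduct] using congrFun hV1 j
  have hsqrt : (√n)⁻¹ * (√n)⁻¹ = (n : ℝ)⁻¹ := by
    rw [← mul_inv, Real.mul_self_sqrt (Nat.cast_nonneg n)]
  -- the unit vector `1/√n` completes the columns of `V` to an orthogonal matrix
  set u : Matrix (Fin n) (Fin 1) ℝ := of fun _ _ => (√n)⁻¹
  have huu : uᵀ * u = 1 := by
    ext i j
    fin_cases i; fin_cases j
    simp [u, mul_apply, hsqrt, (Nat.cast_pos.2 hn).ne']
  have huV : uᵀ * V = 0 := by
    ext i j
    simp [u, mul_apply, ← Finset.mul_sum, hcol]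
  have hVu : Vᵀ * u = 0 := by
    ext i j
    simp [u, mul_apply, ← Finset.sum_mul, hcol]
  have huut : u * uᵀ = (n : ℝ)⁻¹ • vecMulVec 1 1 := by
    ext i j
    simp [u, mul_apply, hsqrt]
  have e : Fin n ≃ Fin 1 ⊕ Fin (n - 1) := (finCongr (by omega)).trans finSumFinEquiv.symm
  have hone : fromCols u V * fromRows uᵀ Vᵀ = 1 := by
    rw [fromCols_mul_fromRows_eq_one_comm e, fromRows_mul_fromCols, huu, huV, hVu, hV2,
      fromBlocks_one]
  rw [fromCols_mul_fromRows, huut] at hone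
  exact eq_sub_of_add_eq' hone

section Centering

variable {ι κ : Type*} [Fintype ι] [Fintype κ]
  {V : Matrix ι κ ℝ} {P : Matrix ι ι ℝ}

lemma commute_mul_transpose_of_mulVec_one [DecidableEq ι] {c : ℝ}
    (hVV : V * Vᵀ = 1 - c • vecMulVec 1 1) (hP : P *ᵥ 1 = 1) (hPt : Pᵀ *ᵥ 1 = 1) :
    Commute P (V * Vᵀ) := by
  have hJ : Commute P (vecMulVec 1 1) := by
    rw [Commute, SemiconjBy, mul_vecMulVec, vecMulVec_mul, ← mulVec_transpose, hP, hPt]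
  rw [hVV]
  exact (Commute.one_right P).sub_right (hJ.smul_right c)

lemma transpose_mul_self_compress [DecidableEq ι] [DecidableEq κ] (hV : Vᵀ * V = 1)
    (hPP : Pᵀ * P = 1) (hcomm : Commute P (V * Vᵀ)) : (Vᵀ * P * V)ᵀ * (Vᵀ * P * V) = 1 := by
  calc (Vᵀ * P * V)ᵀ * (Vᵀ * P * V) = Vᵀ * Pᵀ * ((V * Vᵀ) * P) * V := by
        simp only [transpose_mul, transpose_transpose, Matrix.mul_assoc]
    _ = Vᵀ * (Pᵀ * P) * (V * Vᵀ) * V := by rw [← hcomm.eq]; simp only [Matrix.mul_assoc]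
    _ = 1 := by
        rw [hPP, Matrix.mul_one, Matrix.mul_assoc, Matrix.mul_assoc, ← Matrix.mul_assoc Vᵀ, hV,
          Matrix.one_mul]

lemma mul_compress_mul_transpose [DecidableEq κ] (hV : Vᵀ * V = 1)
    (hcomm : Commute P (V * Vᵀ)) : V * (Vᵀ * P * V) * Vᵀ = P * (V * Vᵀ) := by
  calc V * (Vᵀ * P * V) * Vᵀ = (V * Vᵀ) * P * (V * Vᵀ) := by simp only [Matrix.mul_assoc]
    _ = P * (V * (Vᵀ * V) * Vᵀ) := by rw [← hcomm.eq]; simp only [Matrix.mul_assoc]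
    _ = P * (V * Vᵀ) := by rw [hV, Matrix.mul_one]

end Centering

lemma trace_transpose_mul_nonneg_of_mem_OE {n : ℕ} {V : Matrix (Fin n) (Fin (n - 1)) ℝ}
    (hV1 : Vᵀ *ᵥ 1 = 0) (hV2 : Vᵀ * V = 1) {M : Matrix (Fin n) (Fin n) ℝ}
    (hM : (n : ℝ) * traceNorm (Vᵀ * M * V) ≤ ∑ i, ∑ j, M i j)
    {P : Matrix (Fin n) (Fin n) ℝ} (hP : P ∈ OE n) : 0 ≤ trace (Mᵀ * P) := by
  obtain rfl | hn := Nat.eq_zero_or_pos n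
  · simp
  obtain ⟨hPP, hP1, hPt⟩ : Pᵀ * P = 1 ∧ P *ᵥ 1 = 1 ∧ Pᵀ *ᵥ 1 = 1 := hP
  have hVV := mul_transpose_eq_one_sub_smul_vecMulVec hV1 hV2
  have hcomm := commute_mul_transpose_of_mulVec_one hVV hP1 hPt
  set Q := Vᵀ * P * V
  have hdecomp : P = (n : ℝ)⁻¹ • vecMulVec 1 1 + V * Q * Vᵀ := by
    rw [mul_compress_mul_transpose hV2 hcomm, hVV, Matrix.mul_sub, Matrix.mul_smul,
      mul_vecMulVec, hP1, Matrix.mul_one, add_sub_cancel]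
  have hnegQ : (-Q)ᵀ * (-Q) = 1 := by
    rw [transpose_neg, Matrix.neg_mul, Matrix.mul_neg, neg_neg,
      transpose_mul_self_compress hV2 hPP hcomm]
  have hsplit : trace (Mᵀ * P) = (n : ℝ)⁻¹ * ∑ i, ∑ j, M i j + trace ((Vᵀ * M * V)ᵀ * Q) := by
    have hQ : trace (Mᵀ * (V * Q * Vᵀ)) = trace ((Vᵀ * M * V)ᵀ * Q) := by
      rw [← Matrix.mul_assoc, trace_mul_comm]
      simp only [transpose_mul, transpose_transpose, Matrix.mul_assoc]
    rw [hdecomp, Matrix.mul_add, trace_add, Matrix.mul_smul, trace_smul, mul_vecMulVec,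
      trace_vecMulVec, hQ]
    simp [dotProduct, mulVec, Finset.sum_comm (γ := Fin n)]
  have hvonNeumann := trace_transpose_mul_le_traceNorm (Vᵀ * M * V) (-Q) hnegQ
  rw [Matrix.mul_neg, trace_neg] at hvonNeumann
  have hM' : traceNorm (Vᵀ * M * V) ≤ (n : ℝ)⁻¹ * ∑ i, ∑ j, M i j := by
    rw [inv_mul_eq_div, le_div_iff₀ (Nat.cast_pos.2 hn), mul_comm]
    exact hM
  linarith

lemma fusedGW_objective_le {n : ℕ} {α : ℝ} (hα0 : 0 ≤ α) (hα1 : α ≤ 1)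
    (C D M : Matrix (Fin n) (Fin n) ℝ) {P : Matrix (Fin n) (Fin n) ℝ} (hP : Pᵀ * P = 1)
    (hMP : 0 ≤ trace (Mᵀ * P)) :
    2 * α * trace (C * P * D * Pᵀ) - (1 - α) * trace (Mᵀ * P) ≤ α * (frobSq C + frobSq D) := by
  have hquad := two_mul_trace_mul_conj_le C D hP
  nlinarith [mul_nonneg hα0 (sub_nonneg.2 hquad), mul_nonneg (sub_nonneg.2 hα1) hMP]

theorem OFGW_nonneg_and_degenerate_general (n : ℕ)
    (α : ℝ) (hα0 : 0 ≤ α) (hα1 : α ≤ 1)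
    (C D M : Matrix (Fin n) (Fin n) ℝ)
    (V : Matrix (Fin n) (Fin (n - 1)) ℝ)
    (hV1 : Vᵀ *ᵥ (fun _ => (1 : ℝ)) = 0) (hV2 : Vᵀ * V = 1) :
    ((n : ℝ) * traceNorm (Vᵀ * M * V) ≤ ∑ i, ∑ j, M i j → 0 ≤ OFGW n α C D M)
    ∧ OFGW n α C D 0 = α * OGW n C D := by
  refine ⟨fun hM => ?_, ?_⟩
  · have hsup : sSup ((fun P => 2 * α * trace (C * P * D * Pᵀ) - (1 - α) * trace (Mᵀ * P))
        '' OE n) ≤ α * (frobSq C + frobSq D) := by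
      refine Real.sSup_le ?_ (by have := frobSq_nonneg C; have := frobSq_nonneg D; positivity)
      rintro _ ⟨P, hP, rfl⟩
      exact fusedGW_objective_le hα0 hα1 C D M hP.1
        (trace_transpose_mul_nonneg_of_mem_OE hV1 hV2 hM hP)
    rw [OFGW, div_eq_mul_one_div, mul_comm α, mul_assoc, ← mul_sub]
    exact mul_nonneg (by positivity) (sub_nonneg.2 hsup)
  · have himg : (fun P => 2 * α * trace (C * P * D * Pᵀ)
        - (1 - α) * trace ((0 : Matrix (Fin n) (Fin n) ℝ)ᵀ * P)) '' OE n
        = (2 * α) • (fun P => trace (C * P * D * Pᵀ)) '' OE n := by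
      rw [← Set.image_smul, ← Set.image_comp]
      exact Set.image_congr fun P _ => by simp
    rw [OFGW, OGW, himg, Real.sSup_smul_of_nonneg (by positivity), smul_eq_mul]
    ring

/-- If `1ᵀ M 1 ≥ n·‖M̂‖_*` then `OFGW(C,D,M;α) ≥ 0`; moreover, when `M = 0`,
`OFGW` degenerates to `α·OGW`. -/
theorem OFGW_nonneg_and_degenerate (n : ℕ) (hn : 2 ≤ n)
    (α : ℝ) (hα0 : 0 ≤ α) (hα1 : α ≤ 1)
    (C D M : Matrix (Fin n) (Fin n) ℝ) (hC : C.IsSymm) (hD : D.IsSymm)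
    (V : Matrix (Fin n) (Fin (n - 1)) ℝ)
    (hV1 : Vᵀ *ᵥ (fun _ => (1 : ℝ)) = 0) (hV2 : Vᵀ * V = 1) :
    ((n : ℝ) * traceNorm (Vᵀ * M * V) ≤ ∑ i, ∑ j, M i j → 0 ≤ OFGW n α C D M)
    ∧ OFGW n α C D 0 = α * OGW n C D :=
  OFGW_nonneg_and_degenerate_general n α hα0 hα1 C D M V hV1 hV2
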